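/- Let A be a Hopf algebra, B a left coideal subalgebra, and δ an equivariant derivation of B. Then the right ideal R_δ of B⁺ satisfies Δ̄(R_δ) ⊆ Ā ⊗ R_δ, where Ā = A/(B⁺A) and Δ̄ = (π ⊗ id)∘Δ with π : A → Ā the canonical projection. -/

import Mathlib

open TensorProduct

noncomputable section

/-- A derivation of an algebra `B` into a `B`-bimodule `M`. -/
structure BimodDeriv (B M : Type) [Ring B] [Algebra ℂ B]
    [AddCommGroup M] [Module ℂ M] where
  l : B →ₗ[ℂ] M →ₗ[ℂ] M
  r : B →ₗ[ℂ] M →ₗ[ℂ] M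
  l_mul : ∀ a b m, l (a * b) m = l a (l b m)
  l_one : ∀ m, l 1 m = m
  r_mul : ∀ a b m, r (a * b) m = r b (r a m)
  r_one : ∀ m, r 1 m = m
  lr_comm : ∀ a b m, l a (r b m) = r b (l a m)
  d : B →ₗ[ℂ] M
  leibniz : ∀ a b, d (a * b) = l a (d b) + r b (d a)

variable (A : Type) [Ring A] [HopfAlgebra ℂ A] (B : Subalgebra ℂ A)

/-- The counit of `A` restricted to `B`. -/
def epsB : ↥B →ₐ[ℂ] ℂ := (Bialgebra.counitAlgHom ℂ A).comp B.val

/-- `B⁺ = B ∩ ker ε`. -/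
def Bplus : Submodule ℂ ↥B := LinearMap.ker (epsB A B).toLinearMap

/-- `b ↦ b⁺ = b − ε(b)1`. -/
def plusB : ↥B →ₗ[ℂ] ↥B :=
  LinearMap.id - (Algebra.linearMap ℂ ↥B).comp (epsB A B).toLinearMap

/-- The right ideal `B⁺A` of `A`. -/
def BplusA : Submodule ℂ A :=
  Submodule.span ℂ {x : A | ∃ b : ↥B, epsB A B b = 0 ∧ ∃ a : A, x = (b : A) * a}

/-- `Δ̄ = (π ⊗ id)∘Δ : A → Ā ⊗ A`, with `π : A → Ā = A/(B⁺A)`. -/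
def DeltaBar : A →ₗ[ℂ] (A ⧸ BplusA A B) ⊗[ℂ] A :=
  (TensorProduct.map (BplusA A B).mkQ LinearMap.id) ∘ₗ Coalgebra.comul

variable (comulB : ↥B →ₗ[ℂ] A ⊗[ℂ] ↥B)

/-- The Sweedler-type map `a ⊗ b ↦ a₍₁₎b₍₁₎ ⊗ a₍₂₎·δ(b₍₂₎)`. -/
def sweedlerMap {M : Type} [AddCommGroup M] [Module ℂ M]
    (δ : BimodDeriv ↥B M) : ↥B ⊗[ℂ] ↥B →ₗ[ℂ] A ⊗[ℂ] M :=
  (TensorProduct.map (LinearMap.mul' ℂ A)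
      (TensorProduct.lift
        (LinearMap.mk₂ ℂ (fun a b => δ.l a (δ.d b))
          (fun a a' b => by simp)
          (fun c a b => by simp)
          (fun a b b' => by simp)
          (fun c a b => by simp)))) ∘ₗ
    (TensorProduct.tensorTensorTensorComm ℂ A ↥B A ↥B).toLinearMap ∘ₗ
    (TensorProduct.map comulB comulB)

/-- Equivariance of a derivation of the left coideal subalgebra `B`. -/
def IsEquivariant {M : Type} [AddCommGroup M] [Module ℂ M]
    (δ : BimodDeriv ↥B M) : Prop :=
  ∀ L : List (↥B × ↥B),
    (L.map fun p => δ.l p.1 (δ.d p.2)).sum = 0 →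
    (L.map fun p => sweedlerMap A B comulB δ (p.1 ⊗ₜ[ℂ] p.2)).sum = 0

/-- `R_δ = { Σᵢ ε(aᵢ)bᵢ⁺ : Σᵢ aᵢ·δ(bᵢ) = 0 }`. -/
def RdeltaSet {M : Type} [AddCommGroup M] [Module ℂ M]
    (δ : BimodDeriv ↥B M) : Set ↥B :=
  {x | ∃ L : List (↥B × ↥B),
    (L.map fun p => δ.l p.1 (δ.d p.2)).sum = 0 ∧
    x = (L.map fun p => epsB A B p.1 • plusB A B p.2).sum}

/-!
Write `x ∈ R_δ` as `x = ε'(t)` for a tensor `t = Σ aᵢ ⊗ bᵢ ∈ B ⊗ B` with `d(t) = Σ aᵢ δbᵢ = 0`,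
where `ε'(a ⊗ b) = ε(a) b⁺` (`epsPlus`) and `d(a ⊗ b) = a δb` (`actDeriv`). Let
`Φ(a ⊗ b) = a₍₁₎b₍₁₎ ⊗ a₍₂₎ ⊗ b₍₂₎` (`comulPair`). Equivariance says `(id ⊗ d) Φ(t) = 0`, so,
`A` being flat over `ℂ`, `Φ(t)` lies in `A ⊗ ker d`. On the other hand
`(π ⊗ ε') Φ(a ⊗ b) = π(a b₍₁₎) ⊗ b₍₂₎⁺ = ε(a) Δ̄(b⁺)`, because `π(a y) = ε(a) π(y)` for `a ∈ B`.
Hence `Δ̄(x) = (π ⊗ ε') Φ(t) ∈ Ā ⊗ ε'(ker d) ⊆ Ā ⊗ R_δ`.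
-/

lemma TensorProduct.exists_list_sum_tmul {R M N : Type*} [CommSemiring R] [AddCommMonoid M]
    [AddCommMonoid N] [Module R M] [Module R N] (t : M ⊗[R] N) :
    ∃ L : List (M × N), (L.map fun p => p.1 ⊗ₜ[R] p.2).sum = t := by
  obtain ⟨⟨L⟩, rfl⟩ := TensorProduct.exists_multiset t
  exact ⟨L, by simp⟩

lemma LinearMap.mem_range_lTensor_ker_subtype_of_lTensor_eq_zero {R X N P : Type*} [CommRing R]
    [AddCommGroup X] [AddCommGroup N] [AddCommGroup P] [Module R X] [Module R N] [Module R P]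
    [Module.Flat R X] (g : N →ₗ[R] P) {v : X ⊗[R] N} (hv : g.lTensor X v = 0) :
    v ∈ LinearMap.range ((LinearMap.ker g).subtype.lTensor X) :=
  (Module.Flat.lTensor_exact X (LinearMap.exact_subtype_ker_map g) v).1 hv

section

variable {A B}

lemma epsB_plusB (b : ↥B) : epsB A B (plusB A B b) = 0 := by
  simp [plusB, epsB]

lemma coe_plusB (b : ↥B) : ((plusB A B b : ↥B) : A) = (b : A) - epsB A B b • 1 := by
  simp [plusB, Algebra.smul_def]

lemma mkQ_BplusA_coe_mul (b : ↥B) (y : A) :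
    (BplusA A B).mkQ ((b : A) * y) = epsB A B b • (BplusA A B).mkQ y := by
  rw [← sub_eq_zero, ← map_smul, ← map_sub, Submodule.mkQ_apply,
    Submodule.Quotient.mk_eq_zero]
  refine Submodule.subset_span ⟨plusB A B b, epsB_plusB b, y, ?_⟩
  rw [coe_plusB, sub_mul, smul_mul_assoc, one_mul]

lemma map_mkQ_BplusA_coe_smul {N Q : Type*} [AddCommGroup N] [Module ℂ N] [AddCommGroup Q]
    [Module ℂ Q] (g : N →ₗ[ℂ] Q) (b : ↥B) (w : A ⊗[ℂ] N) :
    TensorProduct.map (BplusA A B).mkQ g ((b : A) • w)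
      = epsB A B b • TensorProduct.map (BplusA A B).mkQ g w := by
  induction w using TensorProduct.induction_on with
  | zero => simp
  | tmul y n =>
    rw [TensorProduct.smul_tmul', TensorProduct.map_tmul, TensorProduct.map_tmul, smul_eq_mul,
      mkQ_BplusA_coe_mul, TensorProduct.smul_tmul']
  | add w₁ w₂ h₁ h₂ => simp only [smul_add, map_add, h₁, h₂]

lemma DeltaBar_one : DeltaBar A B 1 = (BplusA A B).mkQ 1 ⊗ₜ[ℂ] (1 : A) := by
  simp [DeltaBar, Bialgebra.comul_one, Algebra.TensorProduct.one_def]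

def epsPlus : ↥B ⊗[ℂ] ↥B →ₗ[ℂ] ↥B :=
  TensorProduct.lift ((epsB A B).toLinearMap.smulRight (plusB A B))

@[simp]
lemma epsPlus_tmul (a b : ↥B) : epsPlus (a ⊗ₜ[ℂ] b) = epsB A B a • plusB A B b := rfl

def idTensorEpsB : A ⊗[ℂ] ↥B →ₗ[ℂ] A :=
  (TensorProduct.rid ℂ A).toLinearMap ∘ₗ (epsB A B).toLinearMap.lTensor A

@[simp]
lemma idTensorEpsB_tmul (y : A) (b : ↥B) : idTensorEpsB (y ⊗ₜ[ℂ] b) = epsB A B b • y := by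
  simp [idTensorEpsB]

lemma lTensor_epsPlus_mul'_tensorTensorTensorComm (u v : A ⊗[ℂ] ↥B) :
    (epsPlus (B := B)).lTensor A ((LinearMap.mul' ℂ A).rTensor (↥B ⊗[ℂ] ↥B)
        ((TensorProduct.tensorTensorTensorComm ℂ A ↥B A ↥B).toLinearMap (u ⊗ₜ[ℂ] v)))
      = idTensorEpsB u • (plusB A B).lTensor A v := by
  induction u using TensorProduct.induction_on with
  | zero => simp only [TensorProduct.zero_tmul, LinearMap.map_zero, zero_smul]
  | tmul y a =>
    induction v using TensorProduct.induction_on with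
    | zero => simp only [TensorProduct.tmul_zero, LinearMap.map_zero, smul_zero]
    | tmul z b => simp [TensorProduct.smul_tmul', TensorProduct.tmul_smul]
    | add v₁ v₂ h₁ h₂ => simp only [TensorProduct.tmul_add, map_add, h₁, h₂, smul_add]
  | add u₁ u₂ h₁ h₂ => simp only [TensorProduct.add_tmul, map_add, h₁, h₂, add_smul]

lemma map_mkQ_val_lTensor_plusB (w : A ⊗[ℂ] ↥B) :
    TensorProduct.map (BplusA A B).mkQ B.val.toLinearMap ((plusB A B).lTensor A w)
      = TensorProduct.map (BplusA A B).mkQ B.val.toLinearMap w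
        - (BplusA A B).mkQ (idTensorEpsB w) ⊗ₜ[ℂ] (1 : A) := by
  induction w using TensorProduct.induction_on with
  | zero => simp only [LinearMap.map_zero, TensorProduct.zero_tmul, sub_zero]
  | tmul y b =>
    rw [LinearMap.lTensor_tmul, TensorProduct.map_tmul, TensorProduct.map_tmul, idTensorEpsB_tmul,
      AlgHom.toLinearMap_apply, AlgHom.toLinearMap_apply, Subalgebra.coe_val, coe_plusB,
      TensorProduct.tmul_sub, TensorProduct.tmul_smul, LinearMap.map_smul, TensorProduct.smul_tmul']
  | add w₁ w₂ h₁ h₂ =>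
    rw [LinearMap.map_add, LinearMap.map_add, h₁, h₂, LinearMap.map_add, LinearMap.map_add,
      LinearMap.map_add, TensorProduct.add_tmul]
    abel

def comulPair : ↥B ⊗[ℂ] ↥B →ₗ[ℂ] A ⊗[ℂ] (↥B ⊗[ℂ] ↥B) :=
  (LinearMap.mul' ℂ A).rTensor (↥B ⊗[ℂ] ↥B) ∘ₗ
    (TensorProduct.tensorTensorTensorComm ℂ A ↥B A ↥B).toLinearMap ∘ₗ
    TensorProduct.map comulB comulB

variable {comulB}

section Derivation

variable {M : Type} [AddCommGroup M] [Module ℂ M]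

def actDeriv (δ : BimodDeriv ↥B M) : ↥B ⊗[ℂ] ↥B →ₗ[ℂ] M :=
  TensorProduct.lift (δ.l.compl₂ δ.d)

@[simp]
lemma actDeriv_tmul (δ : BimodDeriv ↥B M) (a b : ↥B) :
    actDeriv δ (a ⊗ₜ[ℂ] b) = δ.l a (δ.d b) := rfl

lemma sweedlerMap_eq_lTensor_actDeriv_comp (δ : BimodDeriv ↥B M) :
    sweedlerMap A B comulB δ = (actDeriv δ).lTensor A ∘ₗ comulPair comulB := by
  simp only [sweedlerMap, comulPair, ← LinearMap.lTensor_comp_rTensor, LinearMap.comp_assoc]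
  rfl

lemma mem_RdeltaSet_iff (δ : BimodDeriv ↥B M) (x : ↥B) :
    x ∈ RdeltaSet A B δ ↔ ∃ t ∈ LinearMap.ker (actDeriv δ), epsPlus t = x := by
  constructor
  · rintro ⟨L, hL, rfl⟩
    refine ⟨(L.map fun p => p.1 ⊗ₜ[ℂ] p.2).sum, ?_, ?_⟩
    · simpa [map_list_sum, Function.comp_def] using hL
    · simp [map_list_sum, Function.comp_def]
  · rintro ⟨t, ht, rfl⟩
    obtain ⟨L, rfl⟩ := TensorProduct.exists_list_sum_tmul t
    refine ⟨L, ?_, ?_⟩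
    · simpa [map_list_sum, Function.comp_def] using ht
    · simp [map_list_sum, Function.comp_def]

lemma IsEquivariant.sweedlerMap_eq_zero {δ : BimodDeriv ↥B M}
    (hequi : IsEquivariant A B comulB δ) {t : ↥B ⊗[ℂ] ↥B} (ht : actDeriv δ t = 0) :
    sweedlerMap A B comulB δ t = 0 := by
  obtain ⟨L, rfl⟩ := TensorProduct.exists_list_sum_tmul t
  have := hequi L (by simpa [map_list_sum, Function.comp_def] using ht)
  simpa [map_list_sum, Function.comp_def] using this

end Derivation

variable (hcomulB : ∀ b : ↥B,
  (TensorProduct.map LinearMap.id B.val.toLinearMap) (comulB b) = Coalgebra.comul (b : A))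
include hcomulB

lemma idTensorEpsB_comulB (b : ↥B) : idTensorEpsB (comulB b) = b := by
  have h : (epsB A B).toLinearMap.lTensor A (comulB b) = (b : A) ⊗ₜ[ℂ] (1 : ℂ) := by
    rw [show (epsB A B).toLinearMap = Coalgebra.counit ∘ₗ B.val.toLinearMap from rfl,
      LinearMap.lTensor_comp, LinearMap.comp_apply,
      show B.val.toLinearMap.lTensor A (comulB b) = Coalgebra.comul (b : A) from hcomulB b,
      Coalgebra.lTensor_counit_comul]
  simp [idTensorEpsB, h]

lemma DeltaBar_coe (b : ↥B) :
    DeltaBar A B (b : A) = TensorProduct.map (BplusA A B).mkQ B.val.toLinearMap (comulB b) := by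
  rw [DeltaBar, LinearMap.comp_apply, ← hcomulB, TensorProduct.map_map, LinearMap.comp_id,
    LinearMap.id_comp]

lemma DeltaBar_coe_plusB (b : ↥B) :
    DeltaBar A B (plusB A B b : A)
      = TensorProduct.map (BplusA A B).mkQ B.val.toLinearMap ((plusB A B).lTensor A (comulB b)) := by
  have hπb : (BplusA A B).mkQ (b : A) = epsB A B b • (BplusA A B).mkQ 1 := by
    simpa using mkQ_BplusA_coe_mul b 1
  rw [map_mkQ_val_lTensor_plusB, idTensorEpsB_comulB hcomulB, ← DeltaBar_coe hcomulB, coe_plusB,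
    map_sub, map_smul, DeltaBar_one, hπb, TensorProduct.smul_tmul']

lemma map_mkQ_val_comp_lTensor_epsPlus_comp_comulPair :
    TensorProduct.map (BplusA A B).mkQ B.val.toLinearMap ∘ₗ (epsPlus (B := B)).lTensor A ∘ₗ
        comulPair comulB
      = DeltaBar A B ∘ₗ B.val.toLinearMap ∘ₗ epsPlus := by
  refine TensorProduct.ext' fun a b => ?_
  rw [LinearMap.comp_apply, LinearMap.comp_apply, comulPair, LinearMap.comp_apply,
    LinearMap.comp_apply, TensorProduct.map_tmul, lTensor_epsPlus_mul'_tensorTensorTensorComm,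
    idTensorEpsB_comulB hcomulB, map_mkQ_BplusA_coe_smul, ← DeltaBar_coe_plusB hcomulB,
    LinearMap.comp_apply, LinearMap.comp_apply, epsPlus_tmul, map_smul, map_smul]
  rfl

end

/-- Theorem 1 (ii), second part: If `δ` is an *equivariant*
derivation of the left coideal subalgebra `B`, then the right ideal `R_δ`
of `B⁺` satisfies `Δ̄(R_δ) ⊆ Ā ⊗ R_δ`, where `Ā = A/(B⁺A)` and
`Δ̄ = (π ⊗ id)∘Δ`. -/
theorem DeltaBar_RdeltaSet_subset
    (hcomulB : ∀ b : ↥B,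
      (TensorProduct.map LinearMap.id B.val.toLinearMap) (comulB b)
        = Coalgebra.comul (b : A))
    {M : Type} [AddCommGroup M] [Module ℂ M]
    (δ : BimodDeriv ↥B M)
    (hequi : IsEquivariant A B comulB δ) :
    ∀ x ∈ RdeltaSet A B δ,
      DeltaBar A B ((x : ↥B) : A) ∈
        LinearMap.range (TensorProduct.map
          (LinearMap.id : (A ⧸ BplusA A B) →ₗ[ℂ] (A ⧸ BplusA A B))
          (Submodule.span ℂ (B.val '' RdeltaSet A B δ)).subtype) := by
  intro x hx
  obtain ⟨t, ht, rfl⟩ := (mem_RdeltaSet_iff δ x).1 hx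
  set K := LinearMap.ker (actDeriv δ)
  have hΦt : (actDeriv δ).lTensor A (comulPair comulB t) = 0 := by
    simpa only [sweedlerMap_eq_lTensor_actDeriv_comp, LinearMap.comp_apply]
      using hequi.sweedlerMap_eq_zero (LinearMap.mem_ker.1 ht)
  obtain ⟨w, hw⟩ := LinearMap.mem_range_lTensor_ker_subtype_of_lTensor_eq_zero _ hΦt
  have hΔx : DeltaBar A B (epsPlus t : A)
      = TensorProduct.map (BplusA A B).mkQ (B.val.toLinearMap ∘ₗ epsPlus ∘ₗ K.subtype) w :=
    calc DeltaBar A B (epsPlus t : A)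
        = (DeltaBar A B ∘ₗ B.val.toLinearMap ∘ₗ epsPlus) t := rfl
      _ = TensorProduct.map (BplusA A B).mkQ B.val.toLinearMap
            ((epsPlus.lTensor A) (K.subtype.lTensor A w)) := by
        rw [← map_mkQ_val_comp_lTensor_epsPlus_comp_comulPair hcomulB, hw]; rfl
      _ = TensorProduct.map (BplusA A B).mkQ (B.val.toLinearMap ∘ₗ epsPlus ∘ₗ K.subtype) w := by
        rw [← LinearMap.lTensor_comp_apply, LinearMap.map_lTensor]
  refine TensorProduct.range_map_mono (by simp) ?_ (hΔx ▸ LinearMap.mem_range_self _ w)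
  rintro _ ⟨k, rfl⟩
  simp only [Submodule.range_subtype]
  exact Submodule.subset_span ⟨epsPlus (k : ↥B ⊗[ℂ] ↥B),
    (mem_RdeltaSet_iff δ _).2 ⟨k, k.2, rfl⟩, rfl⟩
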